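/- Let A be an n×n real matrix with eigenvector-eigenvalue pairs (λ₁,v₁),...,(λₙ,vₙ) where λ₁ > λ₂ ≥ ... ≥ λₙ > 0 and v₁ a unit eigenvector. Define d(x,y) = ‖x/⟨x,v₁⟩ − y/⟨y,v₁⟩‖₂ on vectors not perpendicular to v₁. Then the power iteration map f(x) = Ax/‖Ax‖₂ satisfies d(f(x),f(y)) ≤ (λ₂/λ₁)·d(x,y) for all x,y with ⟨x,v₁⟩ ≠ 0 and ⟨y,v₁⟩ ≠ 0. -/

import Mathlib

/-!
After rescaling so that the `v₁`-coordinate is `1`, two points differ by a vector `w ⊥ v₁`.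
Power iteration multiplies the `v₁`-coordinate by `λ₁` and, after renormalising, maps `w` to
`A w / λ₁`; on `v₁ᗮ` the eigenvalues of `A` are bounded by `λ₂`, so `‖A w‖ ≤ λ₂ ‖w‖`.
-/

open scoped RealInnerProductSpace

section

variable {E : Type*} [NormedAddCommGroup E] [InnerProductSpace ℝ E]

theorem inv_inner_smul_smul_eq {s : ℝ} (hs : s ≠ 0) (z u : E) :
    (⟪s • z, u⟫)⁻¹ • (s • z) = (⟪z, u⟫)⁻¹ • z := by
  rw [real_inner_smul_left, mul_inv, smul_smul, mul_right_comm, inv_mul_cancel₀ hs, one_mul]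

theorem norm_inv_inner_smul_sub_le {T : E →ₗ[ℝ] E} {u : E} {μ c : ℝ}
    (hTu : ∀ z, ⟪T z, u⟫ = μ * ⟪z, u⟫) (hT : ∀ w, ⟪w, u⟫ = 0 → ‖T w‖ ≤ c * ‖w‖)
    {x y : E} (hx : ⟪x, u⟫ ≠ 0) (hy : ⟪y, u⟫ ≠ 0) :
    ‖(⟪T x, u⟫)⁻¹ • T x - (⟪T y, u⟫)⁻¹ • T y‖ ≤ c / |μ| * ‖(⟪x, u⟫)⁻¹ • x - (⟪y, u⟫)⁻¹ • y‖ := by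
  set w := (⟪x, u⟫)⁻¹ • x - (⟪y, u⟫)⁻¹ • y
  have hw : ⟪w, u⟫ = 0 := by
    rw [inner_sub_left, real_inner_smul_left, real_inner_smul_left, inv_mul_cancel₀ hx,
      inv_mul_cancel₀ hy, sub_self]
  have hTw : (⟪T x, u⟫)⁻¹ • T x - (⟪T y, u⟫)⁻¹ • T y = μ⁻¹ • T w := by
    simp only [w, hTu, mul_inv, map_sub, map_smul, smul_sub, smul_smul]
  rw [hTw, norm_smul, norm_inv, Real.norm_eq_abs, div_eq_inv_mul, mul_assoc]
  exact mul_le_mul_of_nonneg_left (hT w hw) (inv_nonneg.mpr (abs_nonneg μ))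

variable {ι : Type*} [Fintype ι] (b : OrthonormalBasis ι ℝ E) {T : E →ₗ[ℝ] E} {lam : ι → ℝ}

theorem OrthonormalBasis.inner_apply_of_eigen (heig : ∀ i, T (b i) = lam i • b i)
    (i : ι) (x : E) : ⟪b i, T x⟫ = lam i * ⟪b i, x⟫ := by
  classical
  conv_lhs => rw [← b.sum_repr' x]
  simp [inner_sum, heig, inner_smul_right, b.inner_eq_ite, mul_comm]

theorem OrthonormalBasis.norm_apply_le_of_eigen (heig : ∀ i, T (b i) = lam i • b i)
    {c : ℝ} (hc : 0 ≤ c) {w : E} (hlam : ∀ i, ⟪b i, w⟫ ≠ 0 → |lam i| ≤ c) :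
    ‖T w‖ ≤ c * ‖w‖ := by
  have hsq : ∑ i, ⟪b i, T w⟫ ^ 2 ≤ ∑ i, c ^ 2 * ⟪b i, w⟫ ^ 2 := by
    refine Finset.sum_le_sum fun i _ => ?_
    rw [b.inner_apply_of_eigen heig, mul_pow]
    by_cases hi : ⟪b i, w⟫ = 0
    · simp [hi]
    · exact mul_le_mul_of_nonneg_right (sq_le_sq' (abs_le.mp (hlam i hi)).1
        (abs_le.mp (hlam i hi)).2) (sq_nonneg _)
  rw [← Finset.mul_sum, b.sum_sq_inner_right, b.sum_sq_inner_right, ← mul_pow] at hsq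
  exact (pow_le_pow_iff_left₀ (norm_nonneg _) (by positivity) two_ne_zero).mp hsq

end

theorem stmt_0_general (n : ℕ) (T : EuclideanSpace ℝ (Fin (n + 2)) →ₗ[ℝ] EuclideanSpace ℝ (Fin (n + 2)))
    (lam : Fin (n + 2) → ℝ) (v : Fin (n + 2) → EuclideanSpace ℝ (Fin (n + 2)))
    (hv : Orthonormal ℝ v)
    (heig : ∀ i, T (v i) = lam i • v i)
    (hmono : ∀ i j : Fin (n + 2), i ≤ j → lam j ≤ lam i)
    (hpos : ∀ i, 0 < lam i)
    (f : EuclideanSpace ℝ (Fin (n + 2)) → EuclideanSpace ℝ (Fin (n + 2)))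
    (hf : ∀ x, f x = (‖T x‖)⁻¹ • T x)
    (d : EuclideanSpace ℝ (Fin (n + 2)) → EuclideanSpace ℝ (Fin (n + 2)) → ℝ)
    (hd : ∀ x y, d x y = ‖(⟪x, v 0⟫)⁻¹ • x - (⟪y, v 0⟫)⁻¹ • y‖) :
    ∀ x y, ⟪x, v 0⟫ ≠ 0 → ⟪y, v 0⟫ ≠ 0 →
      d (f x) (f y) ≤ (lam 1 / lam 0) * d x y := by
  intro x y hx hy
  let b := OrthonormalBasis.mk hv
    (hv.linearIndependent.span_eq_top_of_card_eq_finrank' (by simp)).ge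
  have hb : ∀ i, b i = v i := by simp [b]
  have hbeig : ∀ i, T (b i) = lam i • b i := by simpa [hb] using heig
  have hTv (z) : ⟪T z, v 0⟫ = lam 0 * ⟪z, v 0⟫ := by
    rw [real_inner_comm, ← hb, b.inner_apply_of_eigen hbeig, real_inner_comm]
  have hcontr (w) (hw : ⟪w, v 0⟫ = 0) : ‖T w‖ ≤ lam 1 * ‖w‖ := by
    refine b.norm_apply_le_of_eigen hbeig (hpos 1).le fun i hi => ?_
    have hi0 : i ≠ 0 := by rintro rfl; exact hi (by rw [hb, real_inner_comm, hw])
    rw [abs_of_pos (hpos i)]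
    exact hmono 1 i (Fin.one_le_of_ne_zero hi0)
  have hfz (z) (hz : ⟪z, v 0⟫ ≠ 0) : (⟪f z, v 0⟫)⁻¹ • f z = (⟪T z, v 0⟫)⁻¹ • T z := by
    have hTz : T z ≠ 0 := by
      rintro h
      simpa [h, (hpos 0).ne', hz] using hTv z
    rw [hf, inv_inner_smul_smul_eq (inv_ne_zero (norm_ne_zero_iff.mpr hTz))]
  rw [hd, hd, hfz x hx, hfz y hy]
  simpa [abs_of_pos (hpos 0)] using norm_inv_inner_smul_sub_le hTv hcontr hx hy

/-- Power iteration is a contraction with rate λ₂/λ₁ under the metric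
    d(x,y) = ‖x/⟨x,v₁⟩ − y/⟨y,v₁⟩‖₂. -/
theorem stmt_0 (n : ℕ) (T : EuclideanSpace ℝ (Fin (n + 2)) →ₗ[ℝ] EuclideanSpace ℝ (Fin (n + 2)))
    (lam : Fin (n + 2) → ℝ) (v : Fin (n + 2) → EuclideanSpace ℝ (Fin (n + 2)))
    (hv : Orthonormal ℝ v) (hspan : Submodule.span ℝ (Set.range v) = ⊤)
    (heig : ∀ i, T (v i) = lam i • v i)
    (hgap : lam 1 < lam 0)
    (hmono : ∀ i j : Fin (n + 2), i ≤ j → lam j ≤ lam i)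
    (hpos : ∀ i, 0 < lam i)
    (f : EuclideanSpace ℝ (Fin (n + 2)) → EuclideanSpace ℝ (Fin (n + 2)))
    (hf : ∀ x, f x = (‖T x‖)⁻¹ • T x)
    (d : EuclideanSpace ℝ (Fin (n + 2)) → EuclideanSpace ℝ (Fin (n + 2)) → ℝ)
    (hd : ∀ x y, d x y = ‖(⟪x, v 0⟫)⁻¹ • x - (⟪y, v 0⟫)⁻¹ • y‖) :
    ∀ x y, ⟪x, v 0⟫ ≠ 0 → ⟪y, v 0⟫ ≠ 0 →
      d (f x) (f y) ≤ (lam 1 / lam 0) * d x y :=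
  stmt_0_general n T lam v hv heig hmono hpos f hf d hd
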